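/- arXiv:1505.01048 — 7 statements merged into one kernel-verified Lean document; each statement's English description precedes it below -/
import Mathlib

section
/- Let f(x,y) = ((t-1)x - (s-1)y)^2 + 2(t-1)x + 2(s-1)y + 1 where s > 0, t > 0, s + t > 1, s ≠ 1, t ≠ 1. If t > 1, then for any real x > 0 and real y, f(x,y) > 0. -/
theorem stmt_1_general (s t : ℝ) (ht' : 1 < t) :
    ∀ x y : ℝ, 0 < x →
      0 < ((t-1)*x - (s-1)*y)^2 + 2*(t-1)*x + 2*(s-1)*y + 1 := by
  intro x y hx
  have hsq : ((t-1)*x - (s-1)*y)^2 + 2*(t-1)*x + 2*(s-1)*y + 1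
      = ((t-1)*x - (s-1)*y - 1)^2 + 4*((t-1)*x) := by ring
  rw [hsq]
  exact add_pos_of_nonneg_of_pos (sq_nonneg _) (mul_pos four_pos (mul_pos (sub_pos.2 ht') hx))

theorem stmt_1 (s t : ℝ) (hs : 0 < s) (ht : 0 < t) (hst : 1 < s + t)
    (hs1 : s ≠ 1) (ht1 : t ≠ 1) (ht' : 1 < t) :
    ∀ x y : ℝ, 0 < x →
      0 < ((t-1)*x - (s-1)*y)^2 + 2*(t-1)*x + 2*(s-1)*y + 1 :=
  stmt_1_general s t ht'
end

section
/- Let Q be the quadrilateral with vertices (0,0), (1,0), (0,1), (s,t), where s > 0, t > 0, s + t > 1, s ≠ 1, t ≠ 1. Set L(h) = (1/2)(s - t + 2h(t-1))/(s-1), A = 4(s-1)^2 L(h)^2, B = 4(s-1)^2 h^2, and C = -2(s-1)(2(t-1)h^2 + (s-t+2)h - s). Then AB - C^2 = 4(2h-1)(s-1)^2(s-2h)(2(t-1)h + s), and this quantity is positive for all h strictly between 1/2 and s/2. -/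
/-!
With `2(s-1)L = s - t + 2h(t-1)`, the quantity `AB - C²` is `4(s-1)²` times a difference of
two squares, `(2(s-1)Lh)² - (2(t-1)h² + (s-t+2)h - s)²`, whose factors are `(2h-1)(2(t-1)h + s)`
and `s - 2h`. For `h` strictly between `1/2` and `s/2` the product `(2h-1)(s-2h)` is positive,
and the affine factor `2(t-1)h + s` is positive there because it equals `s + t - 1 > 0` at
`h = 1/2` and `st > 0` at `h = s/2`.
-/

open Set

lemma conic_discriminant_eq {s t h L : ℝ} (hL : 2 * (s - 1) * L = s - t + 2 * h * (t - 1)) :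
    4 * (s - 1) ^ 2 * L ^ 2 * (4 * (s - 1) ^ 2 * h ^ 2)
        - (-2 * (s - 1) * (2 * (t - 1) * h ^ 2 + (s - t + 2) * h - s)) ^ 2
      = 4 * (2 * h - 1) * (s - 1) ^ 2 * (s - 2 * h) * (2 * (t - 1) * h + s) := by
  linear_combination (4 * (s - 1) ^ 2 * h ^ 2 * (2 * (s - 1) * L + (s - t + 2 * h * (t - 1)))) * hL

lemma sub_mul_sub_pos_of_mem_uIoo {a b x : ℝ} (hx : x ∈ uIoo a b) : 0 < (x - a) * (b - x) := by
  rcases le_total a b with hab | hba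
  · rw [uIoo_of_le hab] at hx
    exact mul_pos (sub_pos.2 hx.1) (sub_pos.2 hx.2)
  · rw [uIoo_of_ge hba] at hx
    exact mul_pos_of_neg_of_neg (sub_neg.2 hx.2) (sub_neg.2 hx.1)

lemma affine_pos_of_mem_uIcc {a b x y z : ℝ} (hx : 0 < a * x + b) (hy : 0 < a * y + b)
    (hz : z ∈ uIcc x y) : 0 < a * z + b := by
  rw [mem_uIcc] at hz
  rcases le_total 0 a with ha | ha <;> rcases hz with ⟨hz₁, hz₂⟩ | ⟨hz₁, hz₂⟩
  · linarith [mul_le_mul_of_nonneg_left hz₁ ha]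
  · linarith [mul_le_mul_of_nonneg_left hz₁ ha]
  · linarith [mul_le_mul_of_nonpos_left hz₂ ha]
  · linarith [mul_le_mul_of_nonpos_left hz₂ ha]

lemma two_mul_sub_one_mul_add_pos {s t h : ℝ} (hs : 0 < s) (ht : 0 < t) (hst : 1 < s + t)
    (hh : h ∈ uIcc (1 / 2) (s / 2)) : 0 < 2 * (t - 1) * h + s :=
  affine_pos_of_mem_uIcc (by linarith) (by nlinarith [mul_pos hs ht]) hh

theorem stmt_5_general (s t h : ℝ) (hs : 0 < s) (ht : 0 < t) (hst : 1 < s + t)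
    (hs1 : s ≠ 1)
    (L A B C : ℝ)
    (hL : L = (1/2)*(s - t + 2*h*(t-1))/(s-1))
    (hA : A = 4*(s-1)^2*L^2)
    (hB : B = 4*(s-1)^2*h^2)
    (hC : C = -2*(s-1)*(2*(t-1)*h^2 + (s-t+2)*h - s)) :
    A*B - C^2 = 4*(2*h-1)*(s-1)^2*(s-2*h)*(2*(t-1)*h + s) ∧
    (((1 < s ∧ 1/2 < h ∧ h < s/2) ∨ (s < 1 ∧ s/2 < h ∧ h < 1/2)) →
      0 < A*B - C^2) := by
  have hs1' : s - 1 ≠ 0 := sub_ne_zero.2 hs1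
  have hdisc : A*B - C^2 = 4*(2*h-1)*(s-1)^2*(s-2*h)*(2*(t-1)*h + s) := by
    subst hA hB hC
    exact conic_discriminant_eq (by rw [hL]; field_simp)
  refine ⟨hdisc, fun hbetween => ?_⟩
  have hh : h ∈ uIoo (1 / 2) (s / 2) := by
    rcases hbetween with ⟨-, h1, h2⟩ | ⟨-, h1, h2⟩
    exacts [mem_uIoo_of_lt h1 h2, mem_uIoo_of_gt h1 h2]
  have hprod : 0 < (h - 1 / 2) * (s / 2 - h) := sub_mul_sub_pos_of_mem_uIoo hh
  have hlin := two_mul_sub_one_mul_add_pos hs ht hst (uIoo_subset_uIcc_self hh)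
  rw [hdisc, show 4*(2*h-1)*(s-1)^2*(s-2*h)*(2*(t-1)*h + s)
      = 16 * ((h - 1 / 2) * (s / 2 - h) * (s - 1) ^ 2 * (2 * (t - 1) * h + s)) by ring]
  exact mul_pos (by norm_num) (mul_pos (mul_pos hprod (sq_pos_of_ne_zero hs1')) hlin)

theorem stmt_5 (s t h : ℝ) (hs : 0 < s) (ht : 0 < t) (hst : 1 < s + t)
    (hs1 : s ≠ 1) (ht1 : t ≠ 1)
    (L A B C : ℝ)
    (hL : L = (1/2)*(s - t + 2*h*(t-1))/(s-1))
    (hA : A = 4*(s-1)^2*L^2)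
    (hB : B = 4*(s-1)^2*h^2)
    (hC : C = -2*(s-1)*(2*(t-1)*h^2 + (s-t+2)*h - s)) :
    A*B - C^2 = 4*(2*h-1)*(s-1)^2*(s-2*h)*(2*(t-1)*h + s) ∧
    (((1 < s ∧ 1/2 < h ∧ h < s/2) ∨ (s < 1 ∧ s/2 < h ∧ h < 1/2)) →
      0 < A*B - C^2) :=
  stmt_5_general s t h hs ht hst hs1 L A B C hL hA hB hC
end

section
/- With p_{x,y} and f as above, let h₀ = -(1/2)·(((t-1)x+1)((s-t)x-s) - (s-1)y(s+(s-t+2)x)) / (((t-1)x+1)^2 + (s-1)y((s-1)y+2-2(t-1)x)). If f(x,y) ≠ 0, then p_{x,y}(h₀) = 4(s-1)^2 x y ((x-1)t - (s-1)y)((t-1)x - s(y-1)) / f(x,y). -/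
/-! At its critical point a quadratic `a h² + b h + c` takes the value `-discrim a b c / (4a)`.
Here `a = 4f`, `b = 4B`, so `p(h₀) = (f C - B²) / f`, and `f C - B²` factors as the stated
product, a polynomial identity in `s, t, x, y`. -/

theorem quadratic_eval_neg_div_two_mul {K : Type*} [Field K] [NeZero (2 : K)] {a b c : K}
    (ha : a ≠ 0) :
    a * (-b / (2 * a)) ^ 2 + b * (-b / (2 * a)) + c = -discrim a b c / (4 * a) := by
  have h4 : (4 : K) ≠ 0 := by simpa [show (4 : K) = 2 * 2 by norm_num] using two_ne_zero
  rw [discrim]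
  field_simp
  ring

theorem stmt_8 (s t x y : ℝ)
    (f : ℝ) (hf : f = ((t-1)*x - (s-1)*y)^2 + 2*(t-1)*x + 2*(s-1)*y + 1)
    (hf0 : f ≠ 0)
    (p : ℝ → ℝ)
    (hp : ∀ h, p h = 4*f*h^2
      + 4*(((t-1)*x+1)*((s-t)*x-s) - (s-1)*y*(s+(s-t+2)*x))*h
      + ((s-t)*x-s)^2 + 4*s*(s-1)*x*y)
    (h₀ : ℝ)
    (hh₀ : h₀ = -(1/2)*(((t-1)*x+1)*((s-t)*x-s) - (s-1)*y*(s+(s-t+2)*x))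
      / (((t-1)*x+1)^2 + (s-1)*y*((s-1)*y + 2 - 2*(t-1)*x))) :
    p h₀ = 4*(s-1)^2*x*y*((x-1)*t - (s-1)*y)*((t-1)*x - s*(y-1)) / f := by
  set B := ((t-1)*x+1)*((s-t)*x-s) - (s-1)*y*(s+(s-t+2)*x)
  set C := ((s-t)*x-s)^2 + 4*s*(s-1)*x*y
  have h₀_eq : h₀ = -(4 * B) / (2 * (4 * f)) := by
    rw [hh₀, hf]
    field_simp
    ring
  have hp₀ : p h₀ = 4 * f * h₀ ^ 2 + 4 * B * h₀ + C := by
    rw [hp]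
    ring
  have hdiscrim : -discrim (4 * f) (4 * B) C = 16 * (f * C - B ^ 2) := by
    rw [discrim]
    ring
  have hfactor : f * C - B ^ 2 = 4*(s-1)^2*x*y*((x-1)*t - (s-1)*y)*((t-1)*x - s*(y-1)) := by
    rw [hf]
    ring
  rw [hp₀, h₀_eq, quadratic_eval_neg_div_two_mul (mul_ne_zero four_ne_zero hf0), hdiscrim,
    ← hfactor]
  field_simp
  ring
end

section
/- Let s > 1, t > 0, s + t > 1, t ≠ 1, and let p(h) = p_{x,y}(h) for x = s/(s+t), y = t/(s+t) (the intersection of the diagonals). Then p(h) = (4st(s+t-1)/(s+t)^2)·(2h-1)(2h-s), the critical point of p is h₀ = (s+1)/4, and 1/2 < h₀ < s/2. -/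
/-!
At the intersection of the diagonals the quadratic `p_{x,y}` factors with roots `1/2` and `s/2`
(clearing the denominator `(s+t)^2` reduces this to a polynomial identity), so its critical
point is the midpoint `(s+1)/4` of the roots, which lies strictly between them as soon as `s > 1`.
-/

namespace PXY

def f (s t x y : ℝ) : ℝ :=
  ((t-1)*x - (s-1)*y)^2 + 2*(t-1)*x + 2*(s-1)*y + 1

def p (s t x y h : ℝ) : ℝ :=
  4*f s t x y*h^2
    + 4*(((t-1)*x+1)*((s-t)*x-s) - (s-1)*y*(s+(s-t+2)*x))*h
    + ((s-t)*x-s)^2 + 4*s*(s-1)*x*y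

theorem p_diagonal_intersection {s t : ℝ} (hst : s + t ≠ 0) (h : ℝ) :
    p s t (s/(s+t)) (t/(s+t)) h = (4*s*t*(s+t-1)/(s+t)^2)*(2*h-1)*(2*h-s) := by
  unfold p f
  field_simp
  ring

end PXY

theorem deriv_mul_two_sub_mul_two_sub_at_midpoint (c a b : ℝ) :
    deriv (fun h : ℝ => c*(2*h-a)*(2*h-b)) ((a+b)/4) = 0 := by
  have hlin : ∀ r : ℝ, HasDerivAt (fun h : ℝ => 2*h - r) 2 ((a+b)/4) := fun r =>
    ((hasDerivAt_id _).const_mul 2).sub_const r |>.congr_deriv (mul_one 2)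
  have hquad : HasDerivAt (fun h : ℝ => c*(2*h-a)*(2*h-b))
      (c*2*(2*((a+b)/4)-b) + c*(2*((a+b)/4)-a)*2) ((a+b)/4) :=
    ((hlin a).const_mul c).mul (hlin b)
  rw [hquad.deriv]
  ring

theorem stmt_9_general (s t : ℝ) (hs : 1 < s) (hst : 1 < s + t)
    (x y : ℝ) (hx : x = s/(s+t)) (hy : y = t/(s+t))
    (f : ℝ) (hf : f = ((t-1)*x - (s-1)*y)^2 + 2*(t-1)*x + 2*(s-1)*y + 1)
    (p : ℝ → ℝ)
    (hp : ∀ h, p h = 4*f*h^2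
      + 4*(((t-1)*x+1)*((s-t)*x-s) - (s-1)*y*(s+(s-t+2)*x))*h
      + ((s-t)*x-s)^2 + 4*s*(s-1)*x*y)
    (h₀ : ℝ) (hh₀ : h₀ = (s+1)/4) :
    (∀ h, p h = (4*s*t*(s+t-1)/(s+t)^2)*(2*h-1)*(2*h-s)) ∧
    (deriv p) h₀ = 0 ∧ 1/2 < h₀ ∧ h₀ < s/2 := by
  have hfactor : ∀ h, p h = (4*s*t*(s+t-1)/(s+t)^2)*(2*h-1)*(2*h-s) := fun h => by
    rw [hp, hf, hx, hy]
    exact PXY.p_diagonal_intersection (by linarith) h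
  refine ⟨hfactor, ?_, by linarith, by linarith⟩
  rw [funext hfactor, hh₀, add_comm s 1]
  exact deriv_mul_two_sub_mul_two_sub_at_midpoint _ 1 s

theorem stmt_9 (s t : ℝ) (hs : 1 < s) (ht : 0 < t) (hst : 1 < s + t) (ht1 : t ≠ 1)
    (x y : ℝ) (hx : x = s/(s+t)) (hy : y = t/(s+t))
    (f : ℝ) (hf : f = ((t-1)*x - (s-1)*y)^2 + 2*(t-1)*x + 2*(s-1)*y + 1)
    (p : ℝ → ℝ)
    (hp : ∀ h, p h = 4*f*h^2
      + 4*(((t-1)*x+1)*((s-t)*x-s) - (s-1)*y*(s+(s-t+2)*x))*h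
      + ((s-t)*x-s)^2 + 4*s*(s-1)*x*y)
    (h₀ : ℝ) (hh₀ : h₀ = (s+1)/4) :
    (∀ h, p h = (4*s*t*(s+t-1)/(s+t)^2)*(2*h-1)*(2*h-s)) ∧
    (deriv p) h₀ = 0 ∧ 1/2 < h₀ ∧ h₀ < s/2 :=
  stmt_9_general s t hs hst x y hx hy f hf p hp h₀ hh₀
end

section
/- Let Q be the quadrilateral with vertices (0,0), (1,0), (0,1), (s,t), s > 1, t > 0, s+t > 1, t ≠ 1. Suppose (x₀,y₀) is in the interior of Q and lies on neither diagonal (x₀ + y₀ ≠ 1 and s·y₀ ≠ t·x₀). Then the quadratic p_{x₀,y₀}(h) has exactly two distinct real roots, both lying in the open interval (1/2, s/2). -/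
/-!
Write `A = (s-1)y - t(x-1)` and `B = s + (t-1)x - sy`; both are positive inside `Q` (they measure
the distance to the two sides through `(s,t)`). In these terms the discriminant of `p` is
`64 (s-1)² x y A B > 0`, while `p(1/2) = (s-1)²(x+y-1)²` and `p(s/2) = (s-1)²(tx-sy)²` are positive
off the diagonals. So `1/2` and `s/2` lie outside the two roots, and the signs
`p'(1/2) < 0 < p'(s/2)` put them on opposite sides, i.e. both roots lie between them.
-/

theorem exists_two_roots_of_quadratic {a b c l r : ℝ} {q : ℝ → ℝ}
    (hq : ∀ x, q x = a * x ^ 2 + b * x + c) (ha : 0 < a) (hdisc : 0 < discrim a b c)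
    (hl' : 2 * a * l + b < 0) (hr' : 0 < 2 * a * r + b) (hl : 0 < q l) (hr : 0 < q r) :
    ∃ h₁ h₂, h₁ ≠ h₂ ∧ l < h₁ ∧ h₁ < r ∧ l < h₂ ∧ h₂ < r ∧ q h₁ = 0 ∧ q h₂ = 0 ∧
      ∀ h, q h = 0 → h = h₁ ∨ h = h₂ := by
  set δ := √(discrim a b c)
  have hδ : 0 < δ := Real.sqrt_pos.2 hdisc
  have hδsq : discrim a b c = δ * δ := (Real.mul_self_sqrt hdisc.le).symm
  have hroots (h : ℝ) : q h = 0 ↔ h = (-b - δ) / (2 * a) ∨ h = (-b + δ) / (2 * a) := by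
    rw [hq, or_comm, ← quadratic_eq_zero_iff ha.ne' hδsq h, sq]
  have hsquare (z : ℝ) : (2 * a * z + b) ^ 2 - δ ^ 2 = 4 * a * q z := by
    rw [sq δ, ← hδsq, hq, discrim]; ring
  -- `q > 0` at `l` and `r` puts them outside the roots, and the sign of `q'` tells on which side.
  have hl_root : 2 * a * l + b < -δ := by nlinarith [hsquare l, mul_pos ha hl]
  have hr_root : δ < 2 * a * r + b := by nlinarith [hsquare r, mul_pos ha hr]
  have h2a : 0 < 2 * a := by positivity
  refine ⟨(-b - δ) / (2 * a), (-b + δ) / (2 * a), ?_, ?_, ?_, ?_, ?_, ?_, ?_, fun h => (hroots h).1⟩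
  · intro h
    rw [div_left_inj' h2a.ne'] at h
    linarith
  · rw [lt_div_iff₀ h2a]; linarith
  · rw [div_lt_iff₀ h2a]; linarith
  · rw [lt_div_iff₀ h2a]; linarith
  · rw [div_lt_iff₀ h2a]; linarith
  · exact (hroots _).2 (Or.inl rfl)
  · exact (hroots _).2 (Or.inr rfl)

namespace CenterQuadratic

section Identities

variable (s t x y : ℝ)

/-- `p_{x,y}(h) = a h² + b h + c`. -/
def a : ℝ := 4 * (((t - 1) * x - (s - 1) * y) ^ 2 + 2 * (t - 1) * x + 2 * (s - 1) * y + 1)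

def b : ℝ := 4 * (((t - 1) * x + 1) * ((s - t) * x - s) - (s - 1) * y * (s + (s - t + 2) * x))

def c : ℝ := ((s - t) * x - s) ^ 2 + 4 * s * (s - 1) * x * y

theorem a_eq : a s t x y = 4 * (((t - 1) * x - (s - 1) * y + 1) ^ 2 + 4 * (s - 1) * y) := by
  unfold a; ring

theorem discrim_eq : discrim (a s t x y) (b s t x y) (c s t x y) =
    64 * (s - 1) ^ 2 * x * y * (((s - 1) * y - t * (x - 1)) * (s + (t - 1) * x - s * y)) := by
  unfold a b c discrim; ring

theorem deriv_half_eq : 2 * a s t x y * (1 / 2) + b s t x y =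
    -(4 * (s - 1) * (x * ((s - 1) * y - t * (x - 1)) + y * (s + (t - 1) * x - s * y)
      + (x + y - 1) ^ 2)) := by
  unfold a b; ring

theorem deriv_s_half_eq : 2 * a s t x y * (s / 2) + b s t x y =
    4 * (s - 1) * (x * ((s - 1) * y - t * (x - 1)) + y * (s + (t - 1) * x - s * y)
      + (t * x - s * y) ^ 2) := by
  unfold a b; ring

theorem eval_half_eq : a s t x y * (1 / 2) ^ 2 + b s t x y * (1 / 2) + c s t x y =
    (s - 1) ^ 2 * (x + y - 1) ^ 2 := by
  unfold a b c; ring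

theorem eval_s_half_eq : a s t x y * (s / 2) ^ 2 + b s t x y * (s / 2) + c s t x y =
    (s - 1) ^ 2 * (t * x - s * y) ^ 2 := by
  unfold a b c; ring

end Identities

section Signs

variable {s t x y : ℝ}

theorem pos_of_below_top_side (hs : 0 < s) (hy : y < 1 + (t - 1) * x / s) :
    0 < s + (t - 1) * x - s * y := by
  have := mul_lt_mul_of_pos_left hy hs
  rw [mul_add, mul_div_cancel₀ _ hs.ne', mul_one] at this
  linarith

theorem pos_of_above_right_side (hs : 1 < s) (ht : 0 < t) (hy : 0 < y)
    (hright : 1 ≤ x → t * (x - 1) / (s - 1) < y) : 0 < (s - 1) * y - t * (x - 1) := by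
  have hs1 : 0 < s - 1 := sub_pos.2 hs
  rcases le_or_gt x 1 with hx | hx
  · nlinarith [mul_pos hs1 hy, mul_nonneg ht.le (sub_nonneg.2 hx)]
  · have := hright hx.le
    rw [div_lt_iff₀ hs1] at this
    linarith

theorem a_pos (hs : 1 < s) (hy : 0 < y) : 0 < a s t x y := by
  rw [a_eq]
  have := mul_pos (sub_pos.2 hs) hy
  positivity

theorem discrim_pos (hs : 1 < s) (hx : 0 < x) (hy : 0 < y)
    (hA : 0 < (s - 1) * y - t * (x - 1)) (hB : 0 < s + (t - 1) * x - s * y) :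
    0 < discrim (a s t x y) (b s t x y) (c s t x y) := by
  rw [discrim_eq]
  have := sub_pos.2 hs
  positivity

theorem deriv_half_neg (hs : 1 < s) (hx : 0 < x) (hy : 0 < y)
    (hA : 0 < (s - 1) * y - t * (x - 1)) (hB : 0 < s + (t - 1) * x - s * y) :
    2 * a s t x y * (1 / 2) + b s t x y < 0 := by
  rw [deriv_half_eq]
  have := sub_pos.2 hs
  exact neg_neg_of_pos (by positivity)

theorem deriv_s_half_pos (hs : 1 < s) (hx : 0 < x) (hy : 0 < y)
    (hA : 0 < (s - 1) * y - t * (x - 1)) (hB : 0 < s + (t - 1) * x - s * y) :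
    0 < 2 * a s t x y * (s / 2) + b s t x y := by
  rw [deriv_s_half_eq]
  have := sub_pos.2 hs
  positivity

theorem eval_half_pos (hs : 1 < s) (hd : x + y ≠ 1) :
    0 < a s t x y * (1 / 2) ^ 2 + b s t x y * (1 / 2) + c s t x y := by
  rw [eval_half_eq]
  have := sub_pos.2 hs
  have : x + y - 1 ≠ 0 := sub_ne_zero.2 hd
  positivity

theorem eval_s_half_pos (hs : 1 < s) (hd : s * y ≠ t * x) :
    0 < a s t x y * (s / 2) ^ 2 + b s t x y * (s / 2) + c s t x y := by
  rw [eval_s_half_eq]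
  have := sub_pos.2 hs
  have : t * x - s * y ≠ 0 := sub_ne_zero.2 hd.symm
  positivity

end Signs

end CenterQuadratic

theorem stmt_11_general (s t x₀ y₀ : ℝ) (hs : 1 < s) (ht : 0 < t)
    (hx0 : 0 < x₀) (hy0 : 0 < y₀) (hy1 : y₀ < 1 + (t-1)*x₀/s)
    (hint : 1 ≤ x₀ → t*(x₀-1)/(s-1) < y₀)
    (hd1 : x₀ + y₀ ≠ 1) (hd2 : s*y₀ ≠ t*x₀)
    (f : ℝ) (hf : f = ((t-1)*x₀ - (s-1)*y₀)^2 + 2*(t-1)*x₀ + 2*(s-1)*y₀ + 1)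
    (p : ℝ → ℝ)
    (hp : ∀ h, p h = 4*f*h^2
      + 4*(((t-1)*x₀+1)*((s-t)*x₀-s) - (s-1)*y₀*(s+(s-t+2)*x₀))*h
      + ((s-t)*x₀-s)^2 + 4*s*(s-1)*x₀*y₀) :
    ∃ h₁ h₂ : ℝ, h₁ ≠ h₂ ∧
      1/2 < h₁ ∧ h₁ < s/2 ∧ 1/2 < h₂ ∧ h₂ < s/2 ∧
      p h₁ = 0 ∧ p h₂ = 0 ∧
      (∀ h : ℝ, p h = 0 → h = h₁ ∨ h = h₂) := by
  have hB := CenterQuadratic.pos_of_below_top_side (by linarith) hy1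
  have hA := CenterQuadratic.pos_of_above_right_side hs ht hy0 hint
  have hq (h : ℝ) : p h = CenterQuadratic.a s t x₀ y₀ * h ^ 2 + CenterQuadratic.b s t x₀ y₀ * h
      + CenterQuadratic.c s t x₀ y₀ := by
    rw [hp, hf]; unfold CenterQuadratic.a CenterQuadratic.b CenterQuadratic.c; ring
  open CenterQuadratic in
  exact exists_two_roots_of_quadratic hq (a_pos hs hy0) (discrim_pos hs hx0 hy0 hA hB)
    (deriv_half_neg hs hx0 hy0 hA hB) (deriv_s_half_pos hs hx0 hy0 hA hB)
    (by rw [hq]; exact eval_half_pos hs hd1) (by rw [hq]; exact eval_s_half_pos hs hd2)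

theorem stmt_11 (s t x₀ y₀ : ℝ) (hs : 1 < s) (ht : 0 < t) (hst : 1 < s + t) (ht1 : t ≠ 1)
    (hx0 : 0 < x₀) (hxs : x₀ < s) (hy0 : 0 < y₀) (hy1 : y₀ < 1 + (t-1)*x₀/s)
    (hint : 1 ≤ x₀ → t*(x₀-1)/(s-1) < y₀)
    (hd1 : x₀ + y₀ ≠ 1) (hd2 : s*y₀ ≠ t*x₀)
    (f : ℝ) (hf : f = ((t-1)*x₀ - (s-1)*y₀)^2 + 2*(t-1)*x₀ + 2*(s-1)*y₀ + 1)
    (p : ℝ → ℝ)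
    (hp : ∀ h, p h = 4*f*h^2
      + 4*(((t-1)*x₀+1)*((s-t)*x₀-s) - (s-1)*y₀*(s+(s-t+2)*x₀))*h
      + ((s-t)*x₀-s)^2 + 4*s*(s-1)*x₀*y₀) :
    ∃ h₁ h₂ : ℝ, h₁ ≠ h₂ ∧
      1/2 < h₁ ∧ h₁ < s/2 ∧ 1/2 < h₂ ∧ h₂ < s/2 ∧
      p h₁ = 0 ∧ p h₂ = 0 ∧
      (∀ h : ℝ, p h = 0 → h = h₁ ∨ h = h₂) :=
  stmt_11_general s t x₀ y₀ hs ht hx0 hy0 hy1 hint hd1 hd2 f hf p hp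
end

section
/- With p_{x,y}(k) as above for the trapezoid, let k₀ = ((t^2-1)xy + t(t-1)x - (t-1)y + t)/(2((t-1)x+1)^2), assuming (t-1)x + 1 ≠ 0. Then p_{x,y}(k₀) = 4t(t-1)^2 x(x-1)y((t-1)x - y + 1)/((t-1)x+1)^2. In particular, if 0 < x < 1, 0 < y < 1 + (t-1)x, and t > 0, t ≠ 1, then p_{x,y}(k₀) < 0. -/
theorem stmt_17 (t x y : ℝ) (hden : (t-1)*x + 1 ≠ 0)
    (p : ℝ → ℝ)
    (hp : ∀ k, p k = 4*(x*t - x + 1)^2*k^2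
      + 4*(t*x - y*x*t^2 - x*t^2 - y + y*t - t + y*x)*k
      + (t+y)^2 + t*y*(y*t - 2*t - 2*y) + 4*t*x*y*(t-1))
    (k₀ : ℝ)
    (hk₀ : k₀ = ((t^2-1)*x*y + t*(t-1)*x - (t-1)*y + t)/(2*((t-1)*x+1)^2)) :
    p k₀ = 4*t*(t-1)^2*x*(x-1)*y*((t-1)*x - y + 1)/((t-1)*x+1)^2 ∧
    (0 < x → x < 1 → 0 < y → y < 1 + (t-1)*x → 0 < t → t ≠ 1 → p k₀ < 0) := by
  have heq : p k₀ = 4*t*(t-1)^2*x*(x-1)*y*((t-1)*x - y + 1)/((t-1)*x+1)^2 := by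
    rw [hp, hk₀]
    rw [show x*t - x + 1 = (t-1)*x+1 by ring]
    field_simp
    ring
  refine ⟨heq, fun hx hx1 hy hy1 ht ht1 => ?_⟩
  rw [heq]
  have hsq : (0:ℝ) < ((t-1)*x+1)^2 := by positivity
  apply div_neg_of_neg_of_pos _ hsq
  have h1 : (0:ℝ) < (t-1)^2 := by
    have : t - 1 ≠ 0 := sub_ne_zero.mpr ht1
    positivity
  have h2 : x - 1 < 0 := by linarith
  have h3 : 0 < (t-1)*x - y + 1 := by linarith
  have A : 0 < 4*t*(t-1)^2*x*y*((t-1)*x-y+1) := by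
    have h4 : 0 < (4:ℝ)*t := by linarith
    exact mul_pos (mul_pos (mul_pos (mul_pos h4 h1) hx) hy) h3
  nlinarith [mul_neg_of_pos_of_neg A h2]
end

section
/- Let t > 1 and suppose 0 < x < 1, 0 < y < 1 + (t-1)x. With k₀ = ((t^2-1)xy + t(t-1)x - (t-1)y + t)/(2((t-1)x+1)^2), we have 1/2 < k₀ < t/2. Explicitly, k₀ - 1/2 = (t-1)((x-1)^2 + (x-1)y - tx(x-y-1))/(2((t-1)x+1)^2) > 0 and t/2 - k₀ = (t-1)(t(t-1)x^2 - (t+1)xy + tx + y)/(2((t-1)x+1)^2) > 0. -/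
/-!
Both gaps `k₀ - 1/2` and `t/2 - k₀` are `(t - 1)/(2((t-1)x+1)^2)` times a numerator which, on the
trapezoid, is a sum of products of the positive quantities `x`, `y`, `1 - x` and `1 + (t-1)x - y`.
-/

section Trapezoid

variable {t x : ℝ}

lemma lower_gap_numerator_pos {y : ℝ} (ht : 0 < t) (hx0 : 0 < x) (hx1 : x < 1) (hy0 : 0 < y)
    (hy1 : y < 1 + (t-1)*x) :
    0 < (x-1)^2 + (x-1)*y - t*x*(x-y-1) := by
  have hsplit : (x-1)^2 + (x-1)*y - t*x*(x-y-1) = (1-x)*(1+(t-1)*x-y) + t*x*y := by ring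
  rw [hsplit]
  have h1 : 0 < (1-x)*(1+(t-1)*x-y) := mul_pos (by linarith) (by linarith)
  positivity

lemma upper_gap_numerator_pos {y : ℝ} (ht : 0 < t) (hx0 : 0 < x) (hx1 : x < 1) (hy0 : 0 < y)
    (hy1 : y < 1 + (t-1)*x) :
    0 < t*(t-1)*x^2 - (t+1)*x*y + t*x + y := by
  have hsplit : t*(t-1)*x^2 - (t+1)*x*y + t*x + y = t*x*(1+(t-1)*x-y) + y*(1-x) := by ring
  rw [hsplit]
  have h1 : 0 < t*x*(1+(t-1)*x-y) := mul_pos (by positivity) (by linarith)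
  have h2 : 0 < y*(1-x) := mul_pos hy0 (by linarith)
  positivity

lemma lower_gap_eq (y : ℝ) (hd : (t-1)*x+1 ≠ 0) :
    ((t^2-1)*x*y + t*(t-1)*x - (t-1)*y + t)/(2*((t-1)*x+1)^2) - 1/2 =
      (t-1)*((x-1)^2 + (x-1)*y - t*x*(x-y-1))/(2*((t-1)*x+1)^2) := by
  have hD : 2*((t-1)*x+1)^2 ≠ 0 := by positivity
  rw [eq_div_iff hD, sub_mul, div_mul_cancel₀ _ hD]
  ring

lemma upper_gap_eq (y : ℝ) (hd : (t-1)*x+1 ≠ 0) :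
    t/2 - ((t^2-1)*x*y + t*(t-1)*x - (t-1)*y + t)/(2*((t-1)*x+1)^2) =
      (t-1)*(t*(t-1)*x^2 - (t+1)*x*y + t*x + y)/(2*((t-1)*x+1)^2) := by
  have hD : 2*((t-1)*x+1)^2 ≠ 0 := by positivity
  rw [eq_div_iff hD, sub_mul, div_mul_cancel₀ _ hD]
  ring

end Trapezoid

theorem stmt_18 (t x y : ℝ) (ht : 1 < t)
    (hx0 : 0 < x) (hx1 : x < 1) (hy0 : 0 < y) (hy1 : y < 1 + (t-1)*x)
    (k₀ : ℝ)
    (hk₀ : k₀ = ((t^2-1)*x*y + t*(t-1)*x - (t-1)*y + t)/(2*((t-1)*x+1)^2)) :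
    (k₀ - 1/2 = (t-1)*((x-1)^2 + (x-1)*y - t*x*(x-y-1))/(2*((t-1)*x+1)^2) ∧
      0 < k₀ - 1/2) ∧
    (t/2 - k₀ = (t-1)*(t*(t-1)*x^2 - (t+1)*x*y + t*x + y)/(2*((t-1)*x+1)^2) ∧
      0 < t/2 - k₀) := by
  subst hk₀
  have ht0 : 0 < t := by linarith
  have ht1 : 0 < t - 1 := by linarith
  have hd : 0 < (t-1)*x+1 := by linarith
  have hden : 0 < 2*((t-1)*x+1)^2 := by positivity
  have hlower := lower_gap_eq y hd.ne'
  have hupper := upper_gap_eq y hd.ne'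
  refine ⟨⟨hlower, ?_⟩, ⟨hupper, ?_⟩⟩
  · rw [hlower]
    exact div_pos (mul_pos ht1 (lower_gap_numerator_pos ht0 hx0 hx1 hy0 hy1)) hden
  · rw [hupper]
    exact div_pos (mul_pos ht1 (upper_gap_numerator_pos ht0 hx0 hx1 hy0 hy1)) hden
end
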